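/- arXiv:2602.00925 — 4 statements merged into one kernel-verified Lean document; each statement's English description precedes it below -/
import Mathlib

section
/- Let F = (f_1,...,f_m) and G = (g_1,...,g_m) be polynomial vector fields on ℂ^m, with F quasi-homogeneous of degree 1 and G quasi-homogeneous of degree γ ∈ ℕ, both with weight (a_1,...,a_m) ∈ ℕ^m. Assume [F,G] = 0, i.e. ∑_j (f_j ∂g_i/∂x_j - g_j ∂f_i/∂x_j) = 0 for all i. If c is an indicial locus of F (i.e. -a_i c_i = f_i(c), c ≠ 0), then (K(c) + γ I) G(c) = 0, where K(c)_{ij} = ∂f_i/∂x_j(c) + a_i δ_{ij}. In particular, if -γ is not an eigenvalue of K(c), then G(c) = 0. -/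
open MvPolynomial

/-- Chain rule for substituting univariate polynomials into a multivariate polynomial. -/
lemma deriv_aeval_aux {m : ℕ} (s : Fin m → Polynomial ℂ) (p : MvPolynomial (Fin m) ℂ) :
    Polynomial.derivative (MvPolynomial.aeval s p)
      = ∑ j, MvPolynomial.aeval s (pderiv j p) * Polynomial.derivative (s j) := by
  induction p using MvPolynomial.induction_on with
  | C a => simp
  | add p q hp hq =>
      simp only [map_add, hp, hq, add_mul, Finset.sum_add_distrib]
  | mul_X p j hp =>
      simp only [map_mul, MvPolynomial.aeval_X, Polynomial.derivative_mul, hp,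
        MvPolynomial.pderiv_mul, MvPolynomial.pderiv_X, map_add, add_mul,
        Finset.sum_add_distrib, Finset.sum_mul]
      refine congrArg₂ (· + ·) ?_ ?_
      · exact Finset.sum_congr rfl fun k _ => by ring
      · rw [Finset.sum_eq_single j]
        · simp
        · intro k _ hk
          simp [Pi.single_apply, hk]
        · simp

/-- Euler identity for quasi-homogeneous polynomials. -/
lemma euler_id_aux {m : ℕ} (a : Fin m → ℕ) (d : ℕ) (p : MvPolynomial (Fin m) ℂ)
    (hp : ∀ (lam : ℂ) (x : Fin m → ℂ),
      eval (fun j => lam ^ (a j) * x j) p = lam ^ d * eval x p)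
    (x : Fin m → ℂ) :
    ∑ j, (a j : ℂ) * x j * eval x (pderiv j p) = (d : ℂ) * eval x p := by
  have key : ∀ (q : MvPolynomial (Fin m) ℂ) (lam : ℂ),
      Polynomial.eval lam
        (MvPolynomial.aeval (fun j => Polynomial.C (x j) * Polynomial.X ^ (a j)) q)
        = eval (fun j => lam ^ (a j) * x j) q := by
    intro q lam
    induction q using MvPolynomial.induction_on with
    | C b => simp
    | add p q hp hq => simp [hp, hq]
    | mul_X p j hp =>
        simp only [map_mul, MvPolynomial.aeval_X, Polynomial.eval_mul, Polynomial.eval_C,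
          Polynomial.eval_pow, Polynomial.eval_X, MvPolynomial.eval_mul, MvPolynomial.eval_X, hp]
        ring
  have hder : ∀ j : Fin m, Polynomial.eval 1
      (Polynomial.derivative (Polynomial.C (x j) * Polynomial.X ^ (a j)))
      = (a j : ℂ) * x j := by
    intro j
    simp [Polynomial.derivative_C_mul, Polynomial.derivative_X_pow]
    ring
  have hPQ : MvPolynomial.aeval (fun j => Polynomial.C (x j) * Polynomial.X ^ (a j)) p
      = Polynomial.C (eval x p) * Polynomial.X ^ d := by
    apply Polynomial.funext
    intro lam
    rw [key, hp, Polynomial.eval_mul, Polynomial.eval_C, Polynomial.eval_pow,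
      Polynomial.eval_X, mul_comm]
  have h2 := congrArg (fun q => Polynomial.eval 1 (Polynomial.derivative q)) hPQ
  simp only [deriv_aeval_aux, Polynomial.eval_finset_sum, Polynomial.eval_mul, hder, key,
    Polynomial.derivative_C_mul, Polynomial.derivative_X_pow, Polynomial.eval_C,
    Polynomial.eval_pow, Polynomial.eval_X, one_pow, mul_one, one_mul,
    Polynomial.eval_natCast] at h2
  rw [show ((d : ℂ) * eval x p) = eval x p * (d : ℂ) from mul_comm _ _, ← h2]
  exact Finset.sum_congr rfl fun j _ => by ring

/-- For commuting quasi-homogeneous vector fields F (degree 1) and G (degree γ) and an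
indicial locus c of F, one has (K(c) + γ I) G(c) = 0; in particular G(c) = 0 unless
-γ is an eigenvalue of the Kovalevskaya matrix K(c). -/
theorem kovalevskaya_matrix_annihilates_G
    (m : ℕ) (f g : Fin m → MvPolynomial (Fin m) ℂ) (a : Fin m → ℕ) (γ : ℕ)
    (ha : ∀ i, 0 < a i)
    (hQHf : ∀ (lam : ℂ) (x : Fin m → ℂ) (i : Fin m),
      eval (fun j => lam ^ (a j) * x j) (f i) = lam ^ (a i + 1) * eval x (f i))
    (hQHg : ∀ (lam : ℂ) (x : Fin m → ℂ) (i : Fin m),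
      eval (fun j => lam ^ (a j) * x j) (g i) = lam ^ (a i + γ) * eval x (g i))
    (hcomm : ∀ (x : Fin m → ℂ) (i : Fin m),
      ∑ j, (eval x (f j) * eval x (pderiv j (g i))
            - eval x (g j) * eval x (pderiv j (f i))) = 0)
    (c : Fin m → ℂ) (hc : c ≠ 0)
    (hloc : ∀ i, -(a i : ℂ) * c i = eval c (f i)) :
    ∀ K : Matrix (Fin m) (Fin m) ℂ,
      (K = Matrix.of fun i j =>
        eval c (pderiv j (f i)) + (a i : ℂ) * (if i = j then 1 else 0)) →
      (K + (γ : ℂ) • (1 : Matrix (Fin m) (Fin m) ℂ)).mulVec (fun i => eval c (g i)) = 0 ∧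
      (¬ Module.End.HasEigenvalue (Matrix.toLin' K) (-(γ : ℂ)) →
        ∀ i, eval c (g i) = 0) := by
  intro K hK
  -- the key identity: ∑_j ∂_j f_i(c) g_j(c) = -(a_i + γ) g_i(c)
  have hmain : ∀ i, ∑ j, eval c (pderiv j (f i)) * eval c (g j)
      = -(((a i : ℂ) + (γ : ℂ)) * eval c (g i)) := by
    intro i
    have heul := euler_id_aux a (a i + γ) (g i) (fun lam x => hQHg lam x i) c
    have h1 : ∑ j, eval c (f j) * eval c (pderiv j (g i))
        = ∑ j, eval c (g j) * eval c (pderiv j (f i)) := by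
      have h := hcomm c i
      rwa [Finset.sum_sub_distrib, sub_eq_zero] at h
    have h2 : ∑ j, eval c (f j) * eval c (pderiv j (g i))
        = -(((a i : ℂ) + (γ : ℂ)) * eval c (g i)) := by
      calc ∑ j, eval c (f j) * eval c (pderiv j (g i))
          = ∑ j, -((a j : ℂ) * c j * eval c (pderiv j (g i))) := by
            refine Finset.sum_congr rfl fun j _ => ?_
            rw [← hloc j]; ring
        _ = -∑ j, (a j : ℂ) * c j * eval c (pderiv j (g i)) := by
            rw [Finset.sum_neg_distrib]
        _ = -(((a i : ℂ) + (γ : ℂ)) * eval c (g i)) := by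
            rw [heul]; push_cast; ring
    rw [← h2, h1]
    exact Finset.sum_congr rfl fun j _ => mul_comm _ _
  -- the row-wise action of K on G(c)
  have hKrow : ∀ i, ∑ j, K i j * eval c (g j) = -(γ : ℂ) * eval c (g i) := by
    intro i
    have hsplit : ∑ j, K i j * eval c (g j)
        = ∑ j, eval c (pderiv j (f i)) * eval c (g j)
          + ∑ j, (a i : ℂ) * (if i = j then 1 else 0) * eval c (g j) := by
      rw [← Finset.sum_add_distrib]
      refine Finset.sum_congr rfl fun j _ => ?_
      rw [hK]
      simp only [Matrix.of_apply]
      ring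
    have hdiag : ∑ j, (a i : ℂ) * (if i = j then 1 else 0) * eval c (g j)
        = (a i : ℂ) * eval c (g i) := by
      rw [Finset.sum_eq_single i] <;> simp (config := { contextual := true }) [eq_comm]
    rw [hsplit, hdiag, hmain i]
    ring
  have hvec : (K + (γ : ℂ) • (1 : Matrix (Fin m) (Fin m) ℂ)).mulVec
      (fun i => eval c (g i)) = 0 := by
    funext i
    have : ∑ j, (K i j + (γ : ℂ) * (if i = j then 1 else 0)) * eval c (g j) = 0 := by
      have hdiag : ∑ j, (γ : ℂ) * (if i = j then 1 else 0) * eval c (g j)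
          = (γ : ℂ) * eval c (g i) := by
        rw [Finset.sum_eq_single i] <;> simp (config := { contextual := true }) [eq_comm]
      calc ∑ j, (K i j + (γ : ℂ) * (if i = j then 1 else 0)) * eval c (g j)
          = ∑ j, K i j * eval c (g j)
            + ∑ j, (γ : ℂ) * (if i = j then 1 else 0) * eval c (g j) := by
            rw [← Finset.sum_add_distrib]
            exact Finset.sum_congr rfl fun j _ => by ring
        _ = 0 := by rw [hKrow i, hdiag]; ring
    simpa [Matrix.mulVec, dotProduct, Matrix.add_apply, Matrix.smul_apply,
      Matrix.one_apply] using this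
  refine ⟨hvec, ?_⟩
  intro hne i
  by_contra hGi
  apply hne
  have hGne : (fun i => eval c (g i)) ≠ 0 := by
    intro h
    exact hGi (congrFun h i)
  refine Module.End.hasEigenvalue_of_hasEigenvector ⟨?_, hGne⟩
  rw [Module.End.mem_eigenspace_iff, Matrix.toLin'_apply]
  funext k
  simpa [Matrix.mulVec, dotProduct] using hKrow k
end

section
/- With the notation and assumptions of the previous result (commuting quasi-homogeneous vector fields F of degree 1 and G of degree γ, indicial locus c of F), if G(c) ≠ 0 then -γ is an eigenvalue of the Kovalevskaya matrix K(c) of F at c. -/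
/-!
At the indicial locus, `F(c) = -a • c`, so evaluating `[F, G] = 0` at `c` turns
`∑ⱼ Fⱼ(c) ∂ⱼGᵢ(c)` into minus the weighted Euler operator applied to `Gᵢ`, which is
`(aᵢ + γ) Gᵢ(c)` by quasi-homogeneity. Hence `DF(c) G(c) = -(a + γ) • G(c)`, i.e.
`K(c) G(c) = -γ G(c)`. Euler's identity itself comes from differentiating
`t ↦ G(t^a x) = t^(aᵢ + γ) G(x)`, a polynomial identity in `t`, at `t = 1`.
-/

namespace MvPolynomial

variable {R σ : Type*} [CommRing R]

theorem eval_aeval_polynomial (s : σ → Polynomial R) (p : MvPolynomial σ R) (t : R) :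
    (aeval s p).eval t = eval (fun j => (s j).eval t) p := by
  simpa [Polynomial.coe_aeval_eq_eval] using comp_aeval_apply s (Polynomial.aeval t) p

variable [Fintype σ]

theorem derivative_aeval (s : σ → Polynomial R) (p : MvPolynomial σ R) :
    Polynomial.derivative (aeval s p) =
      ∑ j, aeval s (pderiv j p) * Polynomial.derivative (s j) := by
  classical
  induction p using MvPolynomial.induction_on with
  | C r => simp
  | add p q hp hq => simp [hp, hq, add_mul, Finset.sum_add_distrib]
  | mul_X p j hp =>
    simp [hp, pderiv_X, Pi.single_apply, apply_ite, ite_mul, add_mul, Finset.sum_add_distrib,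
      Finset.sum_mul, add_comm, mul_right_comm _ _ (s j), mul_comm (s j)]

theorem sum_weight_mul_eval_pderiv [IsDomain R] [Infinite R] (a : σ → ℕ) (w : ℕ)
    (p : MvPolynomial σ R) (x : σ → R)
    (h : ∀ t : R, eval (fun j => t ^ a j * x j) p = t ^ w * eval x p) :
    ∑ j, (a j : R) * x j * eval x (pderiv j p) = w * eval x p := by
  set s : σ → Polynomial R := fun j => Polynomial.C (x j) * Polynomial.X ^ a j
  have hq : aeval s p = Polynomial.C (eval x p) * Polynomial.X ^ w :=
    Polynomial.funext fun t => by
      simp only [eval_aeval_polynomial, s, Polynomial.eval_mul, Polynomial.eval_C,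
        Polynomial.eval_pow, Polynomial.eval_X, mul_comm (x _), h, mul_comm (eval x p)]
  have hd := congrArg (fun q => (Polynomial.derivative q).eval 1) hq
  simp only [derivative_aeval, Polynomial.eval_finsetSum, Polynomial.eval_mul,
    eval_aeval_polynomial, s, Polynomial.derivative_C_mul_X_pow, Polynomial.eval_C,
    Polynomial.eval_pow, Polynomial.eval_X, one_pow, mul_one] at hd
  rw [mul_comm, ← hd]
  exact Finset.sum_congr rfl fun j _ => by ring

end MvPolynomial

open MvPolynomial

theorem sum_eval_pderiv_mul_eval_of_commute {R σ : Type*} [CommRing R] [IsDomain R] [Infinite R]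
    [Fintype σ] (f g : σ → MvPolynomial σ R) (a : σ → ℕ) (γ : ℕ) (c : σ → R) (i : σ)
    (hQHg : ∀ t : R, eval (fun j => t ^ a j * c j) (g i) = t ^ (a i + γ) * eval c (g i))
    (hcomm : ∑ j, (eval c (f j) * eval c (pderiv j (g i))
      - eval c (g j) * eval c (pderiv j (f i))) = 0)
    (hloc : ∀ j, -(a j : R) * c j = eval c (f j)) :
    ∑ j, eval c (pderiv j (f i)) * eval c (g j) = -((a i + γ : R) * eval c (g i)) := by
  have heuler := sum_weight_mul_eval_pderiv a (a i + γ) (g i) c hQHg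
  push_cast at heuler
  rw [Finset.sum_sub_distrib, sub_eq_zero] at hcomm
  simp only [← hloc, neg_mul, Finset.sum_neg_distrib, heuler] at hcomm
  rw [hcomm]
  exact Finset.sum_congr rfl fun j _ => mul_comm _ _

theorem neg_gamma_eigenvalue_of_G_ne_zero_general
    (m : ℕ) (f g : Fin m → MvPolynomial (Fin m) ℂ) (a : Fin m → ℕ) (γ : ℕ)
    (hQHg : ∀ (lam : ℂ) (x : Fin m → ℂ) (i : Fin m),
      eval (fun j => lam ^ (a j) * x j) (g i) = lam ^ (a i + γ) * eval x (g i))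
    (hcomm : ∀ (x : Fin m → ℂ) (i : Fin m),
      ∑ j, (eval x (f j) * eval x (pderiv j (g i))
            - eval x (g j) * eval x (pderiv j (f i))) = 0)
    (c : Fin m → ℂ)
    (hloc : ∀ i, -(a i : ℂ) * c i = eval c (f i))
    (K : Matrix (Fin m) (Fin m) ℂ)
    (hK : K = Matrix.of fun i j =>
      eval c (pderiv j (f i)) + (a i : ℂ) * (if i = j then 1 else 0))
    (hGc : (fun i => eval c (g i)) ≠ 0) :
    Module.End.HasEigenvalue (Matrix.toLin' K) (-(γ : ℂ)) := by
  have hJ i := sum_eval_pderiv_mul_eval_of_commute f g a γ c i (hQHg · c i) (hcomm c i) hloc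
  have hKv : K.mulVec (fun i => eval c (g i)) = (-(γ : ℂ)) • fun i => eval c (g i) := by
    funext i
    simp [hK, Matrix.mulVec, dotProduct, add_mul, Finset.sum_add_distrib, hJ]
  exact Module.End.hasEigenvalue_of_hasEigenvector
    ⟨Module.End.mem_eigenspace_iff.mpr (by rwa [Matrix.toLin'_apply]), hGc⟩

/-- If G(c) ≠ 0 then -γ is an eigenvalue of the Kovalevskaya matrix of F at c. -/
theorem neg_gamma_eigenvalue_of_G_ne_zero
    (m : ℕ) (f g : Fin m → MvPolynomial (Fin m) ℂ) (a : Fin m → ℕ) (γ : ℕ)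
    (ha : ∀ i, 0 < a i)
    (hQHf : ∀ (lam : ℂ) (x : Fin m → ℂ) (i : Fin m),
      eval (fun j => lam ^ (a j) * x j) (f i) = lam ^ (a i + 1) * eval x (f i))
    (hQHg : ∀ (lam : ℂ) (x : Fin m → ℂ) (i : Fin m),
      eval (fun j => lam ^ (a j) * x j) (g i) = lam ^ (a i + γ) * eval x (g i))
    (hcomm : ∀ (x : Fin m → ℂ) (i : Fin m),
      ∑ j, (eval x (f j) * eval x (pderiv j (g i))
            - eval x (g j) * eval x (pderiv j (f i))) = 0)
    (c : Fin m → ℂ) (hc : c ≠ 0)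
    (hloc : ∀ i, -(a i : ℂ) * c i = eval c (f i))
    (K : Matrix (Fin m) (Fin m) ℂ)
    (hK : K = Matrix.of fun i j =>
      eval c (pderiv j (f i)) + (a i : ℂ) * (if i = j then 1 else 0))
    (hGc : (fun i => eval c (g i)) ≠ 0) :
    Module.End.HasEigenvalue (Matrix.toLin' K) (-(γ : ℂ)) :=
  neg_gamma_eigenvalue_of_G_ne_zero_general m f g a γ hQHg hcomm c hloc K hK hGc
end

section
/- Let ĝ_0,...,ĝ_{m-1} be polynomials on ℂ^{m-1} quasi-homogeneous with ĝ_l(λ^{κ_1}α_1,...,λ^{κ_{m-1}}α_{m-1}) = λ^{κ_l+γ}ĝ_l(α) (κ_l positive integers for l ≥ 1, κ_0 = −1, γ ≥ 2). Suppose ξ = (ξ_0,...,ξ_{m-1}) satisfies ĝ_0(ξ) = ξ_0/γ ≠ 0 and ĝ_i(ξ) = −κ_i ξ_i/γ for i = 1,...,m−1, where here ĝ_l(ξ) means ĝ_l(ξ_1,...,ξ_{m-1}). Then the point ξ̃ with ξ̃_i = ξ_0^{κ_i} ξ_i satisfies ĝ_i(ξ̃)/ĝ_0(ξ̃) = −κ_i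 ξ̃_i for i = 1,...,m−1, i.e. ξ̃ is an indicial locus of the rational system dα_i/dα_0 = ĝ_i/ĝ_0. -/
/-- Lemma 4.9: from an indicial locus ξ of the parameter flow with ĝ₀(ξ) ≠ 0, the point
ξ̃ with ξ̃ᵢ = ξ₀^{κᵢ} ξᵢ is an indicial locus of the system dαᵢ/dα₀ = ĝᵢ/ĝ₀. -/
theorem indicial_locus_of_rational_system
    (n : ℕ) (g : Fin (n + 1) → (Fin n → ℂ) → ℂ) (κ : Fin (n + 1) → ℤ) (γ : ℕ)
    (hκ0 : κ 0 = -1) (hκpos : ∀ i : Fin n, 0 < κ i.succ) (hγ : 2 ≤ γ)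
    (hQH : ∀ (l : Fin (n + 1)) (lam : ℂ), lam ≠ 0 → ∀ (α : Fin n → ℂ),
      g l (fun i => lam ^ (κ i.succ) * α i) = lam ^ (κ l + (γ : ℤ)) * g l α)
    (ξ₀ : ℂ) (ξ : Fin n → ℂ)
    (h0 : g 0 ξ = ξ₀ / (γ : ℂ)) (h0ne : ξ₀ / (γ : ℂ) ≠ 0)
    (hi : ∀ i : Fin n, g i.succ ξ = -(κ i.succ : ℂ) * ξ i / (γ : ℂ)) :
    ∀ i : Fin n,
      g i.succ (fun j => ξ₀ ^ (κ j.succ) * ξ j) / g 0 (fun j => ξ₀ ^ (κ j.succ) * ξ j)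
        = -(κ i.succ : ℂ) * (ξ₀ ^ (κ i.succ) * ξ i) := by
  intro i
  have hξ₀ : ξ₀ ≠ 0 := fun h => h0ne (by simp [h])
  have hγne : (γ : ℂ) ≠ 0 := Nat.cast_ne_zero.mpr (by omega)
  have hz : ∀ a : ℤ, ξ₀ ^ a ≠ 0 := fun a => zpow_ne_zero a hξ₀
  rw [hQH i.succ ξ₀ hξ₀ ξ, hQH 0 ξ₀ hξ₀ ξ, h0, hi i, hκ0]
  have key : ξ₀ ^ (κ i.succ + (γ : ℤ)) = ξ₀ ^ κ i.succ * (ξ₀ ^ (-1 + (γ : ℤ)) * ξ₀) := by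
    have h1 : ξ₀ ^ κ i.succ * (ξ₀ ^ (-1 + (γ : ℤ)) * ξ₀ ^ (1 : ℤ))
        = ξ₀ ^ (κ i.succ + (-1 + (γ : ℤ) + 1)) := by
      rw [← zpow_add₀ hξ₀, ← zpow_add₀ hξ₀]
    simpa using h1.symm
  rw [div_eq_iff (mul_ne_zero (hz _) h0ne)]
  field_simp
  rw [key]; ring_nf
end

section
/- Let F be a quasi-homogeneous Hamiltonian vector field on ℂ^{2n} of degree 1, with canonical coordinates (q_1,p_1,...,q_n,p_n) of weights satisfying deg(q_i) + deg(p_i) = h − 1 for all i, where h = deg(H) is the weighted degree of the quasi-homogeneous Hamiltonian H. Let c be an indicial locus of F with Kovalevskaya matrix K(c). Then the spectrum of K(c) is symmetric about (h−1)/2: if κ is an eigenvalue of K(c), so is h − 1 − κ. In particular, since −1 is always an eigenvalue, h = deg(H) is always a Kovalevskaya exponent. -/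
open MvPolynomial
open Matrix

lemma my_pderiv_comm {σ : Type*} (i j : σ) (p : MvPolynomial σ ℂ) :
    pderiv i (pderiv j p) = pderiv j (pderiv i p) := by
  classical
  rcases eq_or_ne i j with rfl | hij
  · rfl
  · induction p using MvPolynomial.induction_on' with
    | monomial s r =>
      simp only [pderiv_monomial]
      rw [Finsupp.tsub_apply, Finsupp.tsub_apply, Finsupp.single_apply, Finsupp.single_apply,
        if_neg hij, if_neg (Ne.symm hij)]
      congr 1
      · rw [tsub_tsub, tsub_tsub, add_comm]
      · rw [Nat.sub_zero, Nat.sub_zero]; ring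
    | add p q hp hq => simp only [map_add, hp, hq]

lemma my_weight_eq_sum {σ : Type*} [Fintype σ] (w : σ → ℕ) (s : σ →₀ ℕ) :
    (Finsupp.weight w s : ℕ) = ∑ k, w k * s k := by
  rw [Finsupp.weight_apply, Finsupp.sum]
  rw [Finset.sum_subset (Finset.subset_univ _)]
  · exact Finset.sum_congr rfl fun k _ => by rw [smul_eq_mul, mul_comm]
  · intro x _ hx
    simp [Finsupp.notMem_support_iff.mp hx]

lemma my_isWH {σ : Type*} [Fintype σ] [DecidableEq σ] (w : σ → ℕ) (h : ℕ)
    (H : MvPolynomial σ ℂ)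
    (hQH : ∀ (lam : ℂ) (x : σ → ℂ),
      eval (fun k => lam ^ (w k) * x k) H = lam ^ h * eval x H) :
    H.IsWeightedHomogeneous w h := by
  intro s hs
  by_contra hne
  set d := (Finsupp.weight w s : ℕ) with hd
  have hzero : weightedHomogeneousComponent w d H = 0 := by
    apply MvPolynomial.funext
    intro x
    rw [map_zero]
    set Q : Polynomial ℂ := ∑ t ∈ H.support,
      Polynomial.C (coeff t H * ∏ k, x k ^ t k) * Polynomial.X ^ (Finsupp.weight w t : ℕ) with hQ
    have hQeval : ∀ lam : ℂ, Q.eval lam = eval (fun k => lam ^ w k * x k) H := by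
      intro lam
      rw [eval_eq', hQ, Polynomial.eval_finset_sum]
      refine Finset.sum_congr rfl fun t _ => ?_
      rw [Polynomial.eval_mul, Polynomial.eval_C, Polynomial.eval_pow, Polynomial.eval_X]
      rw [my_weight_eq_sum, ← Finset.prod_pow_eq_pow_sum, mul_assoc, ← Finset.prod_mul_distrib]
      refine congrArg _ (Finset.prod_congr rfl fun k _ => ?_)
      rw [mul_pow, ← pow_mul, mul_comm (x k ^ t k)]
    have hQid : Q = Polynomial.C (eval x H) * Polynomial.X ^ h := by
      apply Polynomial.funext
      intro lam
      rw [hQeval, hQH, Polynomial.eval_mul, Polynomial.eval_C, Polynomial.eval_pow,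
        Polynomial.eval_X, mul_comm]
    have hcoe := congrArg (fun P => Polynomial.coeff P d) hQid
    simp only [Polynomial.finset_sum_coeff, Polynomial.coeff_C_mul, Polynomial.coeff_X_pow,
      hQ] at hcoe
    rw [if_neg hne, mul_zero] at hcoe
    rw [weightedHomogeneousComponent_apply, map_sum]
    rw [← hcoe]
    rw [Finset.sum_filter]
    refine Finset.sum_congr rfl fun t _ => ?_
    rw [eval_monomial]
    rw [Finsupp.prod_fintype _ _ (fun k => pow_zero (x k))]
    by_cases hw : (Finsupp.weight w t : ℕ) = d
    · rw [if_pos hw, if_pos hw.symm, mul_one]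
    · rw [if_neg hw, if_neg (fun hh => hw hh.symm), mul_zero]
  have : coeff s (weightedHomogeneousComponent w d H) = coeff s H := by
    rw [coeff_weightedHomogeneousComponent, if_pos hd.symm]
  rw [hzero, coeff_zero] at this
  exact hs this.symm

lemma my_euler_monomial {σ : Type*} [Fintype σ] [DecidableEq σ] (w : σ → ℕ)
    (s : σ →₀ ℕ) (r : ℂ) :
    ∑ k, C ((w k : ℂ)) * (X k * pderiv k (monomial s r))
      = C ((Finsupp.weight w s : ℕ) : ℂ) * monomial s r := by
  have key : ∀ k, X k * pderiv k (monomial s r) = monomial s (r * (s k : ℂ)) := by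
    intro k
    rw [pderiv_monomial, X, monomial_mul, one_mul]
    rcases Nat.eq_zero_or_pos (s k) with h0 | h0
    · rw [h0]; norm_num
    · have hss : Finsupp.single k 1 + (s - Finsupp.single k 1) = s := by
        ext m
        rcases eq_or_ne m k with rfl | hmk
        · simp only [Finsupp.add_apply, Finsupp.single_eq_same, Finsupp.tsub_apply]
          omega
        · simp only [Finsupp.add_apply, Finsupp.single_eq_of_ne' (Ne.symm hmk),
            Finsupp.tsub_apply, zero_add, Nat.sub_zero]
      rw [hss]
  simp only [key, C_mul_monomial]
  rw [← map_sum (monomial s), my_weight_eq_sum]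
  congr 1
  push_cast
  rw [Finset.sum_mul]
  exact Finset.sum_congr rfl fun k _ => by ring

lemma my_euler {σ : Type*} [Fintype σ] [DecidableEq σ] (w : σ → ℕ) (d : ℕ)
    (p : MvPolynomial σ ℂ) (hp : p.IsWeightedHomogeneous w d) :
    ∑ k, C ((w k : ℂ)) * (X k * pderiv k p) = C ((d : ℂ)) * p := by
  have hk : ∀ k, C ((w k : ℂ)) * (X k * pderiv k p)
      = ∑ s ∈ p.support, C ((w k : ℂ)) * (X k * pderiv k (monomial s (coeff s p))) := by
    intro k
    conv_lhs => rw [p.as_sum]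
    rw [map_sum, Finset.mul_sum, Finset.mul_sum]
  calc ∑ k, C ((w k : ℂ)) * (X k * pderiv k p)
      = ∑ k, ∑ s ∈ p.support, C ((w k : ℂ)) * (X k * pderiv k (monomial s (coeff s p))) := by
        exact Finset.sum_congr rfl fun k _ => hk k
    _ = ∑ s ∈ p.support, ∑ k, C ((w k : ℂ)) * (X k * pderiv k (monomial s (coeff s p))) :=
        Finset.sum_comm
    _ = ∑ s ∈ p.support, C ((d : ℂ)) * monomial s (coeff s p) := by
        refine Finset.sum_congr rfl fun s hs => ?_
        rw [my_euler_monomial, hp (mem_support_iff.mp hs)]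
    _ = C ((d : ℂ)) * p := by rw [← Finset.mul_sum, ← p.as_sum]

lemma my_euler_pderiv {σ : Type*} [Fintype σ] [DecidableEq σ] (w : σ → ℕ) (d : ℕ)
    (p : MvPolynomial σ ℂ) (hp : p.IsWeightedHomogeneous w d) (m : σ) :
    ∑ k, C ((w k : ℂ)) * (X k * pderiv k (pderiv m p))
      = (C ((d : ℂ)) - C ((w m : ℂ))) * pderiv m p := by
  have h1 := congrArg (fun q => pderiv m q) (my_euler w d p hp)
  simp only [map_sum, pderiv_mul, pderiv_X, pderiv_C, zero_mul, zero_add] at h1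
  have h2 : ∀ k, C ((w k : ℂ)) * (Pi.single m (1 : MvPolynomial σ ℂ) k * pderiv k p
      + X k * pderiv m (pderiv k p))
      = (if k = m then C ((w m : ℂ)) * pderiv m p else 0)
        + C ((w k : ℂ)) * (X k * pderiv k (pderiv m p)) := by
    intro k
    rcases eq_or_ne k m with rfl | hkm
    · rw [Pi.single_eq_same, if_pos rfl, one_mul, my_pderiv_comm, mul_add]
    · rw [Pi.single_eq_of_ne hkm, if_neg hkm, zero_mul, zero_add, zero_add,
        my_pderiv_comm m k]
  rw [Finset.sum_congr rfl (fun k _ => h2 k), Finset.sum_add_distrib,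
    Finset.sum_ite_eq' Finset.univ m (fun _ => C ((w m : ℂ)) * pderiv m p),
    if_pos (Finset.mem_univ m)] at h1
  rw [sub_mul]
  linear_combination h1

lemma my_eig_iff_det {σ : Type*} [Fintype σ] [DecidableEq σ] (M : Matrix σ σ ℂ) (μ : ℂ) :
    Module.End.HasEigenvalue (Matrix.toLin' M) μ ↔ (M - μ • 1).det = 0 := by
  rw [← Matrix.exists_mulVec_eq_zero_iff]
  constructor
  · intro hE
    obtain ⟨v, hv⟩ := hE.exists_hasEigenvector
    refine ⟨v, hv.right, ?_⟩
    have h1 : Matrix.toLin' M v = μ • v := Module.End.mem_eigenspace_iff.mp hv.left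
    rw [Matrix.toLin'_apply] at h1
    rw [Matrix.sub_mulVec, Matrix.smul_mulVec, Matrix.one_mulVec, h1, sub_self]
  · rintro ⟨v, hv0, hv⟩
    refine Module.End.hasEigenvalue_of_hasEigenvector (x := v) ⟨Module.End.mem_eigenspace_iff.mpr ?_, hv0⟩
    rw [Matrix.toLin'_apply]
    rw [Matrix.sub_mulVec, Matrix.smul_mulVec, Matrix.one_mulVec] at hv
    rw [sub_eq_zero] at hv
    exact hv

noncomputable def Jmat (n : ℕ) : Matrix (Fin n ⊕ Fin n) (Fin n ⊕ Fin n) ℂ :=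
  Matrix.of fun k l =>
    match k, l with
    | Sum.inl i, Sum.inr j => if i = j then 1 else 0
    | Sum.inr i, Sum.inl j => if i = j then -1 else 0
    | _, _ => 0

lemma Jmat_mul_self (n : ℕ) : Jmat n * Jmat n = -1 := by
  ext k l
  rcases k with i | i <;> rcases l with j | j <;>
    simp [Jmat, Matrix.mul_apply, Fintype.sum_sum_type, Matrix.one_apply,
      Finset.sum_ite_eq, Finset.sum_ite_eq', ite_and, eq_comm]
  split_ifs <;> norm_num

lemma Jmat_det_ne_zero (n : ℕ) : (Jmat n).det ≠ 0 := by
  intro h0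
  have := congrArg Matrix.det (Jmat_mul_self n)
  rw [Matrix.det_mul, h0, mul_zero] at this
  have h1 : ((-1 : Matrix (Fin n ⊕ Fin n) (Fin n ⊕ Fin n) ℂ)).det = 1 := by
    have : (-1 : Matrix (Fin n ⊕ Fin n) (Fin n ⊕ Fin n) ℂ) = -(1 : Matrix _ _ ℂ) := rfl
    rw [this, Matrix.det_neg, Matrix.det_one, mul_one, Fintype.card_sum]
    exact Even.neg_one_pow ⟨Fintype.card (Fin n), rfl⟩
  rw [h1] at this
  exact one_ne_zero this.symm

lemma pairing_det {n : ℕ} (K : Matrix (Fin n ⊕ Fin n) (Fin n ⊕ Fin n) ℂ) (z κ : ℂ)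
    (hKJ : K * Jmat n + Jmat n * Kᵀ = z • Jmat n)
    (hdet : (K - κ • 1).det = 0) :
    (K - (z - κ) • 1).det = 0 := by
  have hKJ' : K * Jmat n = z • Jmat n - Jmat n * Kᵀ := eq_sub_of_add_eq hKJ
  have e1 : (K - (z - κ) • (1 : Matrix _ _ ℂ)) * Jmat n = -(Jmat n * (K - κ • 1)ᵀ) := by
    rw [Matrix.sub_mul, Matrix.smul_mul, Matrix.one_mul, hKJ',
      Matrix.transpose_sub, Matrix.transpose_smul, Matrix.transpose_one,
      Matrix.mul_sub, Matrix.mul_smul, Matrix.mul_one, sub_smul, neg_sub]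
    abel
  have e2 := congrArg Matrix.det e1
  simp only [Matrix.det_mul, Matrix.det_neg, Matrix.det_transpose, hdet,
    mul_zero] at e2
  exact (mul_eq_zero.mp e2).resolve_right (Jmat_det_ne_zero n)
/-- Proposition 4.14: for a quasi-homogeneous Hamiltonian vector field with
deg(qᵢ) + deg(pᵢ) = deg(H) - 1, the spectrum of the Kovalevskaya matrix at an indicial
locus is symmetric about (deg(H)-1)/2; in particular deg(H) is always a Kovalevskaya
exponent. -/
theorem kovalevskaya_exponents_pairing
    (n : ℕ) (H : MvPolynomial (Fin n ⊕ Fin n) ℂ)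
    (a : Fin n ⊕ Fin n → ℕ) (h : ℕ) (hh : 1 ≤ h)
    (ha : ∀ k, 0 < a k)
    (hpair : ∀ i : Fin n, a (Sum.inl i) + a (Sum.inr i) = h - 1)
    (hQH : ∀ (lam : ℂ) (x : Fin n ⊕ Fin n → ℂ),
      eval (fun k => lam ^ (a k) * x k) H = lam ^ h * eval x H)
    (F : Fin n ⊕ Fin n → MvPolynomial (Fin n ⊕ Fin n) ℂ)
    (hF : ∀ i : Fin n, F (Sum.inl i) = pderiv (Sum.inr i) H ∧
      F (Sum.inr i) = -pderiv (Sum.inl i) H)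
    (c : Fin n ⊕ Fin n → ℂ) (hc : c ≠ 0)
    (hloc : ∀ k, -(a k : ℂ) * c k = eval c (F k))
    (K : Matrix (Fin n ⊕ Fin n) (Fin n ⊕ Fin n) ℂ)
    (hK : K = Matrix.of fun k l =>
      eval c (pderiv l (F k)) + (a k : ℂ) * (if k = l then 1 else 0)) :
    (∀ κ : ℂ, Module.End.HasEigenvalue (Matrix.toLin' K) κ →
      Module.End.HasEigenvalue (Matrix.toLin' K) ((h : ℂ) - 1 - κ)) ∧
    Module.End.HasEigenvalue (Matrix.toLin' K) (h : ℂ) := by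
  subst hK
  set K : Matrix (Fin n ⊕ Fin n) (Fin n ⊕ Fin n) ℂ := Matrix.of fun k l =>
      eval c (pderiv l (F k)) + (a k : ℂ) * (if k = l then 1 else 0) with hK
  have hKapp : ∀ k l, K k l = eval c (pderiv l (F k)) + (a k : ℂ) * (if k = l then 1 else 0) :=
    fun k l => rfl
  have hWH : H.IsWeightedHomogeneous a h := my_isWH a h H hQH
  have hcast : ∀ i : Fin n, (a (Sum.inl i) : ℂ) + (a (Sum.inr i) : ℂ) = (h : ℂ) - 1 := by
    intro i
    have := hpair i
    have h2 : ((a (Sum.inl i) + a (Sum.inr i) : ℕ) : ℂ) = ((h - 1 : ℕ) : ℂ) := by rw [this]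
    rw [Nat.cast_add, Nat.cast_sub hh, Nat.cast_one] at h2
    exact h2
  have hsym : ∀ k l, eval c (pderiv l (pderiv k H)) = eval c (pderiv k (pderiv l H)) :=
    fun k l => by rw [my_pderiv_comm]
  -- the matrix identity
  have hKJ1 : ∀ k j, (K * Jmat n) k (Sum.inl j) = -K k (Sum.inr j) := by
    intro k j
    simp [Matrix.mul_apply, Jmat, Fintype.sum_sum_type, mul_ite, Finset.sum_ite_eq,
      Finset.sum_ite_eq']
  have hKJ2 : ∀ k j, (K * Jmat n) k (Sum.inr j) = K k (Sum.inl j) := by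
    intro k j
    simp [Matrix.mul_apply, Jmat, Fintype.sum_sum_type, mul_ite, Finset.sum_ite_eq,
      Finset.sum_ite_eq']
  have hJK1 : ∀ l i, (Jmat n * Kᵀ) (Sum.inl i) l = K l (Sum.inr i) := by
    intro l i
    simp [Matrix.mul_apply, Jmat, Fintype.sum_sum_type, ite_mul, Finset.sum_ite_eq,
      Finset.sum_ite_eq', Matrix.transpose_apply]
  have hJK2 : ∀ l i, (Jmat n * Kᵀ) (Sum.inr i) l = -K l (Sum.inl i) := by
    intro l i
    simp [Matrix.mul_apply, Jmat, Fintype.sum_sum_type, ite_mul, Finset.sum_ite_eq,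
      Finset.sum_ite_eq', Matrix.transpose_apply]
  have hKJ : K * Jmat n + Jmat n * Kᵀ = ((h : ℂ) - 1) • Jmat n := by
    ext k l
    rcases k with i | i <;> rcases l with j | j
    · rw [Matrix.add_apply, hKJ1, hJK1, hKapp, hKapp, (hF i).1, (hF j).1]
      simp only [Jmat, Matrix.smul_apply, Matrix.of_apply, smul_zero]
      rw [hsym (Sum.inr j) (Sum.inr i)]
      simp
    · rw [Matrix.add_apply, hKJ2, hJK1, hKapp, hKapp, (hF i).1, (hF j).2]
      simp only [Jmat, Matrix.smul_apply, Matrix.of_apply, map_neg, eval_neg]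
      rw [hsym (Sum.inl j) (Sum.inr i)]
      rcases eq_or_ne i j with rfl | hij
      · simp only [eq_self_iff_true, if_true, smul_eq_mul, mul_one]
        linear_combination hcast i
      · simp [hij, Ne.symm hij]
    · rw [Matrix.add_apply, hKJ1, hJK2, hKapp, hKapp, (hF i).2, (hF j).1]
      simp only [Jmat, Matrix.smul_apply, Matrix.of_apply, map_neg, eval_neg]
      rw [hsym (Sum.inr j) (Sum.inl i)]
      rcases eq_or_ne i j with rfl | hij
      · simp only [eq_self_iff_true, if_true, smul_eq_mul, mul_one]
        linear_combination -hcast i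
      · simp [hij, Ne.symm hij]
    · rw [Matrix.add_apply, hKJ2, hJK2, hKapp, hKapp, (hF i).2, (hF j).2]
      simp only [Jmat, Matrix.smul_apply, Matrix.of_apply, map_neg, eval_neg, smul_zero]
      rw [hsym (Sum.inl j) (Sum.inl i)]
      simp
  -- pairing
  have pairing : ∀ κ : ℂ, Module.End.HasEigenvalue (Matrix.toLin' K) κ →
      Module.End.HasEigenvalue (Matrix.toLin' K) ((h : ℂ) - 1 - κ) := by
    intro κ hκ
    rw [my_eig_iff_det] at hκ ⊢
    exact pairing_det K ((h : ℂ) - 1) κ hKJ hκ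
  refine ⟨pairing, ?_⟩
  -- -1 is an eigenvalue with eigenvector (a k * c k)
  have hbase : ∀ m, ∑ l, (a l : ℂ) * c l * eval c (pderiv l (pderiv m H))
      = ((h : ℂ) - (a m : ℂ)) * eval c (pderiv m H) := by
    intro m
    have h1 := congrArg (eval c) (my_euler_pderiv a h H hWH m)
    simp only [map_sum, eval_mul, eval_sub, eval_C, eval_X, map_sub] at h1
    rw [← h1]
    exact Finset.sum_congr rfl fun l _ => by ring
  have hEulerF : ∀ k, ∑ l, (a l : ℂ) * c l * eval c (pderiv l (F k))
      = ((a k : ℂ) + 1) * eval c (F k) := by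
    intro k
    rcases k with i | i
    · rw [(hF i).1, hbase (Sum.inr i)]
      have : (h : ℂ) - (a (Sum.inr i) : ℂ) = (a (Sum.inl i) : ℂ) + 1 := by
        linear_combination -hcast i
      rw [this]
    · rw [(hF i).2]
      simp only [map_neg, eval_neg, mul_neg, Finset.sum_neg_distrib]
      rw [hbase (Sum.inl i)]
      have : (h : ℂ) - (a (Sum.inl i) : ℂ) = (a (Sum.inr i) : ℂ) + 1 := by
        linear_combination -hcast i
      rw [this]
  set v : Fin n ⊕ Fin n → ℂ := fun k => (a k : ℂ) * c k with hv
  have hv0 : v ≠ 0 := by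
    obtain ⟨k, hk⟩ := Function.ne_iff.mp hc
    intro h0
    apply hk
    have := congrFun h0 k
    simp only [hv, Pi.zero_apply] at this
    rcases mul_eq_zero.mp this with h1 | h1
    · exact absurd (Nat.cast_eq_zero.mp h1) (ha k).ne'
    · exact h1
  have hKv : Matrix.toLin' K v = (-1 : ℂ) • v := by
    funext k
    rw [Matrix.toLin'_apply]
    show ∑ l, K k l * v l = _
    have hterm : ∀ l, K k l * v l = (a l : ℂ) * c l * eval c (pderiv l (F k))
        + (if k = l then (a k : ℂ) * ((a k : ℂ) * c k) else 0) := by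
      intro l
      rw [hKapp]
      rcases eq_or_ne k l with rfl | hkl
      · simp only [eq_self_iff_true, if_true, hv]; ring
      · simp only [if_neg hkl, hv]; ring
    rw [Finset.sum_congr rfl fun l _ => hterm l, Finset.sum_add_distrib,
      Finset.sum_ite_eq Finset.univ k, if_pos (Finset.mem_univ k), hEulerF k, ← hloc k]
    simp only [Pi.smul_apply, hv, smul_eq_mul]
    ring
  have heig : Module.End.HasEigenvalue (Matrix.toLin' K) (-1 : ℂ) :=
    Module.End.hasEigenvalue_of_hasEigenvector
      ⟨Module.End.mem_eigenspace_iff.mpr hKv, hv0⟩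
  have := pairing (-1) heig
  have he : (h : ℂ) - 1 - (-1) = (h : ℂ) := by ring
  rwa [he] at this
end
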